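/- arXiv:2105.03096 — 2 statements merged into one kernel-verified Lean document; each statement's English description precedes it below -/
import Mathlib

section
/- Let k ∈ ℤ^n with k·tΔ < 0, k componentwise nonnegative or componentwise nonpositive, and |k(i)| > −k·tΔ for every nonzero entry k(i). Then there exists c ∈ ℤ such that (k,c) is t-inductive; concretely, if k ≥ 0 take c = k·t⁻ + 1, and if k ≤ 0 take c = k·t⁻ + k·tΔ. -/
open Finset

def dot {n : ℕ} (k v : Fin n → ℤ) : ℤ := ∑ i, k i * v i

def tDelta {n : ℕ} (tm tp : Fin n → ℕ) : Fin n → ℤ := fun i => (tp i : ℤ) - (tm i : ℤ)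

def natCast {n : ℕ} (m : Fin n → ℕ) : Fin n → ℤ := fun i => (m i : ℤ)

def TInductive {n : ℕ} (k : Fin n → ℤ) (c : ℤ) (tm tp : Fin n → ℕ) : Prop :=
  ∀ m : Fin n → ℕ, (∀ i, tm i ≤ m i) → c ≤ dot k (natCast m) →
    c ≤ dot k (fun i => (m i : ℤ) + tDelta tm tp i)

lemma dot_add_split {n : ℕ} (k : Fin n → ℤ) (m : Fin n → ℕ) (tm tp : Fin n → ℕ) :
    dot k (fun i => (m i : ℤ) + tDelta tm tp i) = dot k (natCast m) + dot k (tDelta tm tp) := by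
  simp [dot, natCast, mul_add, Finset.sum_add_distrib]

lemma dot_sub_split {n : ℕ} (k : Fin n → ℤ) (m tm : Fin n → ℕ) :
    dot k (natCast m) - dot k (natCast tm) = ∑ i, k i * ((m i : ℤ) - tm i) := by
  simp [dot, natCast, mul_sub, Finset.sum_sub_distrib]

theorem stmt9 (n : ℕ) (hn : 1 ≤ n) (k : Fin n → ℤ) (tm tp : Fin n → ℕ)
    (hor : dot k (tDelta tm tp) < 0)
    (hsign : (∀ i, 0 ≤ k i) ∨ (∀ i, k i ≤ 0))
    (hbig : ∀ i, k i ≠ 0 → -(dot k (tDelta tm tp)) < |k i|) :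
    ∃ c : ℤ, TInductive k c tm tp ∧
      ((∀ i, 0 ≤ k i) → c = dot k (natCast tm) + 1) ∧
      ((∀ i, k i ≤ 0) → c = dot k (natCast tm) + dot k (tDelta tm tp)) := by
  have hknz : ¬ ((∀ i, 0 ≤ k i) ∧ (∀ i, k i ≤ 0)) := by
    rintro ⟨h1, h2⟩
    have : ∀ i, k i = 0 := fun i => le_antisymm (h2 i) (h1 i)
    have : dot k (tDelta tm tp) = 0 := by simp [dot, this]
    omega
  rcases hsign with hpos | hneg
  · refine ⟨dot k (natCast tm) + 1, ?_, fun _ => rfl, fun h2 => absurd ⟨hpos, h2⟩ hknz⟩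
    intro m hm hc
    rw [dot_add_split]
    set D := dot k (tDelta tm tp) with hD
    have hsum : 1 ≤ ∑ i, k i * ((m i : ℤ) - tm i) := by
      rw [← dot_sub_split]; omega
    have hterm : ∀ i, (0:ℤ) ≤ k i * ((m i : ℤ) - tm i) := fun i =>
      mul_nonneg (hpos i) (by have := hm i; omega)
    obtain ⟨i, hi⟩ : ∃ i, 0 < k i * ((m i : ℤ) - tm i) := by
      by_contra h
      push_neg at h
      have : ∑ i, k i * ((m i : ℤ) - tm i) ≤ 0 :=
        Finset.sum_nonpos (fun i _ => h i)
      omega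
    have hki : 0 < k i := by
      rcases lt_trichotomy (k i) 0 with h | h | h
      · exact absurd (hpos i) (by omega)
      · simp [h] at hi
      · exact h
    have hmi : 1 ≤ (m i : ℤ) - tm i := by
      by_contra h
      have : (m i : ℤ) - tm i ≤ 0 := by omega
      nlinarith
    have hge : k i ≤ k i * ((m i : ℤ) - tm i) := le_mul_of_one_le_right hki.le hmi
    have hbi := hbig i hki.ne'
    rw [abs_of_pos hki] at hbi
    have hle : k i * ((m i : ℤ) - tm i) ≤ ∑ j, k j * ((m j : ℤ) - tm j) :=
      Finset.single_le_sum (fun j _ => hterm j) (Finset.mem_univ i)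
    have := dot_sub_split k m tm
    omega
  · refine ⟨dot k (natCast tm) + dot k (tDelta tm tp), ?_,
      fun h1 => absurd ⟨h1, hneg⟩ hknz, fun _ => rfl⟩
    intro m hm hc
    rw [dot_add_split]
    set D := dot k (tDelta tm tp) with hD
    have : dot k (natCast tm) ≤ dot k (natCast m) := by
      by_contra h
      push_neg at h
      have hsum : ∑ i, k i * ((m i : ℤ) - tm i) < 0 := by
        rw [← dot_sub_split]; omega
      have hterm : ∀ i, k i * ((m i : ℤ) - tm i) ≤ 0 := fun i =>
        mul_nonpos_of_nonpos_of_nonneg (hneg i) (by have := hm i; omega)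
      obtain ⟨i, hi⟩ : ∃ i, k i * ((m i : ℤ) - tm i) < 0 := by
        by_contra hno
        push_neg at hno
        have : (0:ℤ) ≤ ∑ i, k i * ((m i : ℤ) - tm i) :=
          Finset.sum_nonneg (fun i _ => hno i)
        omega
      have hki : k i < 0 := by
        rcases lt_trichotomy (k i) 0 with h' | h' | h'
        · exact h'
        · simp [h'] at hi
        · exact absurd (hneg i) (by omega)
      have hmi : 1 ≤ (m i : ℤ) - tm i := by
        by_contra h'
        have : (m i : ℤ) - tm i ≤ 0 := by omega
        nlinarith
      have hge : k i * ((m i : ℤ) - tm i) ≤ k i := by nlinarith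
      have hbi := hbig i hki.ne
      rw [abs_of_neg hki] at hbi
      have hle : ∑ j, k j * ((m j : ℤ) - tm j) ≤ k i * ((m i : ℤ) - tm i) := by
        have h1 : -(k i * ((m i : ℤ) - tm i)) ≤ ∑ j, -(k j * ((m j : ℤ) - tm j)) :=
          Finset.single_le_sum (fun j _ => neg_nonneg.mpr (hterm j)) (Finset.mem_univ i)
        rw [Finset.sum_neg_distrib] at h1
        linarith
      have := dot_sub_split k m tm
      omega
    omega
end

section
/- Let (k,c) be a non-trivial t-inductive half space with k ≥ 0 componentwise, and every nonzero entry of k at least 2·gcd(k). Then c < k_max·k_min + k·t⁻, where k_max and k_min are the entries of k with maximal resp. minimal absolute value among nonzero entries. -/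
open Finset

lemma bezout_finset {ι : Type*} [DecidableEq ι] (s : Finset ι) (f : ι → ℤ) :
    ∃ y : ι → ℤ, ∑ i ∈ s, f i * y i = s.gcd f := by
  induction s using Finset.induction_on with
  | empty => exact ⟨0, by simp⟩
  | @insert a s ha ih =>
    obtain ⟨y, hy⟩ := ih
    refine ⟨fun i => if i = a then Int.gcdA (f a) (s.gcd f) else y i * Int.gcdB (f a) (s.gcd f), ?_⟩
    rw [Finset.sum_insert ha, Finset.gcd_insert]
    simp only [if_pos rfl]
    rw [Finset.sum_congr rfl (fun i hi => by rw [if_neg (by rintro rfl; exact ha hi)])]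
    have : ∑ i ∈ s, f i * (y i * Int.gcdB (f a) (s.gcd f))
        = (∑ i ∈ s, f i * y i) * Int.gcdB (f a) (s.gcd f) := by
      rw [Finset.sum_mul]; exact Finset.sum_congr rfl fun i _ => by ring
    rw [this, hy]
    have h2 := Int.gcd_eq_gcd_ab (f a) (s.gcd f)
    have h3 : gcd (f a) (s.gcd f) = (Int.gcd (f a) (s.gcd f) : ℤ) := by
      exact (Int.coe_gcd _ _).symm
    rw [h3, h2]; simp

def Sgrow {n : ℕ} (b : Fin n → ℕ) (a : ℕ) : ℕ → Finset (ZMod a)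
  | 0 => {0}
  | (j+1) => Sgrow b a j ∪ Finset.univ.biUnion (fun i => (Sgrow b a j).image (· + (b i : ZMod a)))

lemma Sgrow_mono {n : ℕ} (b : Fin n → ℕ) (a : ℕ) {i j : ℕ} (h : i ≤ j) :
    Sgrow b a i ⊆ Sgrow b a j := by
  induction j with
  | zero => rw [Nat.le_zero.mp h]
  | succ j ih =>
    by_cases h' : i ≤ j
    · exact (ih h').trans (by rw [Sgrow]; exact Finset.subset_union_left)
    · have : i = j + 1 := by omega
      rw [this]

lemma Sgrow_sound {n : ℕ} (b : Fin n → ℕ) (a : ℕ) :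
    ∀ j, ∀ r ∈ Sgrow b a j, ∃ x : Fin n → ℕ, (∑ i, x i) ≤ j ∧ ((∑ i, b i * x i : ℕ) : ZMod a) = r := by
  intro j
  induction j with
  | zero =>
    intro r hr
    simp only [Sgrow, Finset.mem_singleton] at hr
    exact ⟨0, by simp, by simp [hr]⟩
  | succ j ih =>
    intro r hr
    rw [Sgrow, Finset.mem_union] at hr
    rcases hr with hr | hr
    · obtain ⟨x, hx1, hx2⟩ := ih r hr
      exact ⟨x, hx1.trans (Nat.le_succ j), hx2⟩
    · rw [Finset.mem_biUnion] at hr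
      obtain ⟨i, -, hr⟩ := hr
      rw [Finset.mem_image] at hr
      obtain ⟨r', hr', rfl⟩ := hr
      obtain ⟨x, hx1, hx2⟩ := ih r' hr'
      refine ⟨fun l => x l + if l = i then 1 else 0, ?_, ?_⟩
      · rw [Finset.sum_add_distrib, Finset.sum_ite_eq' Finset.univ i (fun _ => 1)]
        simp only [Finset.mem_univ, if_pos]
        omega
      · have : ∑ l, b l * (x l + if l = i then 1 else 0)
            = (∑ l, b l * x l) + b i := by
          have h' : ∀ l, b l * (x l + if l = i then 1 else 0)
              = b l * x l + (if l = i then b l else 0) := by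
            intro l; split <;> ring
          rw [Finset.sum_congr rfl (fun l _ => h' l), Finset.sum_add_distrib,
            Finset.sum_ite_eq' Finset.univ i b]
          simp
        rw [this, Nat.cast_add, hx2]

lemma Sgrow_complete {n : ℕ} (b : Fin n → ℕ) (a : ℕ) :
    ∀ (t : ℕ) (x : Fin n → ℕ), (∑ i, x i) = t → ((∑ i, b i * x i : ℕ) : ZMod a) ∈ Sgrow b a t := by
  intro t
  induction t with
  | zero =>
    intro x hx
    have h0 : ∀ i ∈ Finset.univ, x i = 0 := fun i _ => by
      have := Finset.sum_eq_zero_iff.mp hx; exact this i (Finset.mem_univ i)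
    have : ∑ i, b i * x i = 0 := Finset.sum_eq_zero fun i hi => by rw [h0 i hi, mul_zero]
    rw [this]; simp [Sgrow]
  | succ t ih =>
    intro x hx
    have : ∃ i, x i ≠ 0 := by
      by_contra h
      push_neg at h
      simp [h] at hx
    obtain ⟨i, hi⟩ := this
    set x' : Fin n → ℕ := Function.update x i (x i - 1) with hx'
    have hagree : ∀ l ∈ Finset.univ \ {i}, x' l = x l := by
      intro l hl
      rw [hx', Function.update_of_ne (by simpa using (Finset.mem_sdiff.mp hl).2)]
    have hxi' : x' i = x i - 1 := by rw [hx', Function.update_self]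
    have hsum' : (∑ l, x' l) = t := by
      have h1 := Finset.sum_eq_sum_sdiff_singleton_add (Finset.mem_univ i) x'
      have h2 := Finset.sum_eq_sum_sdiff_singleton_add (Finset.mem_univ i) x
      have h3 : ∑ l ∈ Finset.univ \ {i}, x' l = ∑ l ∈ Finset.univ \ {i}, x l :=
        Finset.sum_congr rfl hagree
      omega
    have hval : (∑ l, b l * x l) = (∑ l, b l * x' l) + b i := by
      have h1 := Finset.sum_eq_sum_sdiff_singleton_add (Finset.mem_univ i) (fun l => b l * x' l)
      have h2 := Finset.sum_eq_sum_sdiff_singleton_add (Finset.mem_univ i) (fun l => b l * x l)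
      have h3 : ∑ l ∈ Finset.univ \ {i}, b l * x' l = ∑ l ∈ Finset.univ \ {i}, b l * x l :=
        Finset.sum_congr rfl fun l hl => by rw [hagree l hl]
      have h4 : b i * x i = b i * x' i + b i := by
        rw [hxi']
        calc b i * x i = b i * ((x i - 1) + 1) := by
              rw [Nat.sub_add_cancel (Nat.one_le_iff_ne_zero.mpr hi)]
          _ = b i * (x i - 1) + b i := by ring
      omega
    rw [hval, Nat.cast_add]
    rw [Sgrow]
    apply Finset.mem_union_right
    rw [Finset.mem_biUnion]
    exact ⟨i, Finset.mem_univ i, Finset.mem_image.mpr ⟨_, ih x' hsum', rfl⟩⟩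

lemma Sgrow_stable {n : ℕ} (b : Fin n → ℕ) (a : ℕ) {j : ℕ}
    (h : Sgrow b a (j+1) = Sgrow b a j) : ∀ m, Sgrow b a (j+m) = Sgrow b a j := by
  intro m
  induction m with
  | zero => rfl
  | succ m ih =>
    have e : Sgrow b a (j + (m+1)) = Sgrow b a (j+m) ∪
        Finset.univ.biUnion (fun i => (Sgrow b a (j+m)).image (· + (b i : ZMod a))) := rfl
    rw [e, ih]
    exact h

lemma Sgrow_full {n : ℕ} (b : Fin n → ℕ) (a : ℕ) [NeZero a]
    (hsurj : ∀ r : ZMod a, ∃ x : Fin n → ℕ, ((∑ i, b i * x i : ℕ) : ZMod a) = r)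
    {j : ℕ} (h : Sgrow b a (j+1) = Sgrow b a j) : Sgrow b a j = Finset.univ := by
  apply Finset.eq_univ_of_forall
  intro r
  obtain ⟨x, hx⟩ := hsurj r
  have h1 := Sgrow_complete b a (∑ i, x i) x rfl
  have h2 : Sgrow b a (∑ i, x i) ⊆ Sgrow b a (j + ∑ i, x i) :=
    Sgrow_mono b a (Nat.le_add_left _ _)
  rw [Sgrow_stable b a h (∑ i, x i)] at h2
  exact h2 (hx ▸ h1)

lemma Sgrow_card {n : ℕ} (b : Fin n → ℕ) (a : ℕ) [NeZero a]
    (hsurj : ∀ r : ZMod a, ∃ x : Fin n → ℕ, ((∑ i, b i * x i : ℕ) : ZMod a) = r) :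
    ∀ j, Sgrow b a j = Finset.univ ∨ j + 1 ≤ (Sgrow b a j).card := by
  intro j
  induction j with
  | zero => right; simp [Sgrow]
  | succ j ih =>
    rcases ih with h | h
    · left
      apply Finset.Subset.antisymm (Finset.subset_univ _)
      rw [← h]
      exact Sgrow_mono b a (Nat.le_succ j)
    · by_cases hst : Sgrow b a (j+1) = Sgrow b a j
      · left
        rw [hst]
        exact Sgrow_full b a hsurj hst
      · right
        have hss : Sgrow b a j ⊂ Sgrow b a (j+1) :=
          ⟨Sgrow_mono b a (Nat.le_succ j), fun hsub => hst (Finset.Subset.antisymm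
            (by intro r hr; exact hsub hr) (Sgrow_mono b a (Nat.le_succ j)))⟩
        have := Finset.card_lt_card hss
        omega

lemma Sgrow_reach {n : ℕ} (b : Fin n → ℕ) (a : ℕ) [NeZero a]
    (hsurj : ∀ r : ZMod a, ∃ x : Fin n → ℕ, ((∑ i, b i * x i : ℕ) : ZMod a) = r)
    (r : ZMod a) : r ∈ Sgrow b a (a - 1) := by
  have ha : 0 < a := Nat.pos_of_ne_zero (NeZero.ne a)
  rcases Sgrow_card b a hsurj (a-1) with h | h
  · rw [h]; exact Finset.mem_univ r
  · have hle := Finset.card_le_univ (Sgrow b a (a-1))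
    rw [ZMod.card] at hle
    have : (Sgrow b a (a-1)).card = Fintype.card (ZMod a) := by
      rw [ZMod.card]; omega
    rw [Finset.eq_univ_of_card _ this]
    exact Finset.mem_univ r

lemma surj_of_gcd_one {n a : ℕ} [NeZero a] (b : Fin n → ℕ)
    (hg : Finset.univ.gcd (fun i => (b i : ℤ)) = 1) (r : ZMod a) :
    ∃ x : Fin n → ℕ, ((∑ i, b i * x i : ℕ) : ZMod a) = r := by
  obtain ⟨y, hy⟩ := bezout_finset Finset.univ (fun i => (b i : ℤ))
  rw [hg] at hy
  have hapos : (0:ℤ) < (a:ℤ) := by exact_mod_cast Nat.pos_of_ne_zero (NeZero.ne a)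
  refine ⟨fun i => (((r.val : ℤ) * y i) % (a:ℤ)).toNat, ?_⟩
  have hcast : ∀ i : Fin n, (((((r.val : ℤ) * y i) % (a:ℤ)).toNat : ℕ) : ZMod a)
      = (((r.val : ℤ) * y i : ℤ) : ZMod a) := by
    intro i
    have h1 : (((((r.val:ℤ) * y i) % (a:ℤ)).toNat : ℕ) : ℤ) = ((r.val:ℤ) * y i) % (a:ℤ) :=
      Int.toNat_of_nonneg (Int.emod_nonneg _ (ne_of_gt hapos))
    have h2 : (((((r.val:ℤ) * y i) % (a:ℤ)).toNat : ℕ) : ZMod a)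
        = ((((((r.val:ℤ) * y i) % (a:ℤ)).toNat : ℕ) : ℤ) : ZMod a) := by push_cast; ring
    rw [h2, h1, Int.emod_def]
    push_cast
    simp [ZMod.natCast_self]
  have h2 : ((∑ i, (b i:ℤ) * ((r.val:ℤ) * y i) : ℤ) : ZMod a) = r := by
    have h3 : ∑ i, (b i:ℤ) * ((r.val:ℤ) * y i) = (r.val:ℤ) * ∑ i, (b i:ℤ) * y i := by
      rw [Finset.mul_sum]; exact Finset.sum_congr rfl fun i _ => by ring
    rw [h3, hy, mul_one]
    push_cast
    exact ZMod.natCast_rightInverse r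
  refine Eq.trans ?_ h2
  push_cast
  exact Finset.sum_congr rfl fun i _ => by rw [hcast i]; push_cast; ring

lemma rep {n : ℕ} (b : Fin n → ℕ) (hg : Finset.univ.gcd (fun i => (b i : ℤ)) = 1)
    (imax imin : Fin n) (hminnz : b imin ≠ 0)
    (hmax : ∀ l, b l ≤ b imax)
    (M : ℕ) (hM : b imin * b imax ≤ M) :
    ∃ x : Fin n → ℕ, ∑ i, b i * x i = M := by
  haveI : NeZero (b imin) := ⟨hminnz⟩
  obtain ⟨x, hx1, hx2⟩ := Sgrow_sound b (b imin) (b imin - 1) _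
    (Sgrow_reach b (b imin) (surj_of_gcd_one b hg) (M : ZMod (b imin)))
  set a := b imin with ha
  set s := ∑ i, b i * x i with hs
  have hsle : s ≤ (a-1) * b imax := by
    calc s ≤ ∑ i, b imax * x i :=
          Finset.sum_le_sum fun i _ => Nat.mul_le_mul_right _ (hmax i)
      _ = b imax * ∑ i, x i := by rw [Finset.mul_sum]
      _ ≤ b imax * (a-1) := Nat.mul_le_mul_left _ hx1
      _ = (a-1) * b imax := mul_comm _ _
  have hsM : s ≤ M := by
    calc s ≤ (a-1) * b imax := hsle
      _ ≤ a * b imax := Nat.mul_le_mul_right _ (Nat.sub_le a 1)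
      _ ≤ M := hM
  have hmodeq : s ≡ M [MOD a] := (ZMod.natCast_eq_natCast_iff _ _ _).mp hx2
  obtain ⟨q, hq⟩ := (Nat.modEq_iff_dvd' hsM).mp hmodeq
  refine ⟨fun l => x l + if l = imin then q else 0, ?_⟩
  have h' : ∀ l, b l * (x l + if l = imin then q else 0)
      = b l * x l + (if l = imin then b imin * q else 0) := by
    intro l; split
    · rename_i hl; rw [hl]; ring
    · ring
  rw [Finset.sum_congr rfl (fun l _ => h' l), Finset.sum_add_distrib,
    Finset.sum_ite_eq' Finset.univ imin (fun _ => b imin * q)]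
  simp only [Finset.mem_univ, if_pos]
  rw [← hs, ← ha]
  omega

theorem stmt16 (n : ℕ) (hn : 1 ≤ n) (k : Fin n → ℤ) (c : ℤ) (tm tp : Fin n → ℕ)
    (hk0 : ∀ i, 0 ≤ k i) (hknz : k ≠ 0)
    (hor : dot k (tDelta tm tp) < 0)
    (hnt : dot k (natCast tm) < c - dot k (tDelta tm tp))
    (hind : ¬ ∃ x : Fin n → ℕ,
        c ≤ dot k (natCast x) + dot k (natCast tm) ∧
        dot k (natCast x) + dot k (natCast tm) < c - dot k (tDelta tm tp))
    (hbig : ∀ i, k i ≠ 0 → 2 * Finset.univ.gcd k ≤ k i) :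
    ∀ imax imin : Fin n, k imax ≠ 0 → k imin ≠ 0 →
      (∀ l, k l ≠ 0 → k l ≤ k imax) → (∀ l, k l ≠ 0 → k imin ≤ k l) →
      c < k imax * k imin + dot k (natCast tm) := by
  intro imax imin hmaxnz hminnz hmax hmin
  by_contra hcon
  push_neg at hcon
  set g := Finset.univ.gcd k with hgdef
  have hgdvd : ∀ i, g ∣ k i := fun i => Finset.gcd_dvd (Finset.mem_univ i)
  have hgne : g ≠ 0 := by
    intro h
    exact hmaxnz (Finset.gcd_eq_zero_iff.mp (hgdef ▸ h) imax (Finset.mem_univ imax))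
  have hgnn : 0 ≤ g := by
    have := Finset.normalize_gcd (s := (Finset.univ : Finset (Fin n))) (f := k)
    rw [← Int.abs_eq_normalize] at this
    rw [hgdef, ← this]
    exact abs_nonneg _
  have hgpos : 0 < g := lt_of_le_of_ne hgnn (Ne.symm hgne)
  set b : Fin n → ℕ := fun i => ((k i) / g).toNat with hbdef
  have hkb : ∀ i, k i = g * (b i : ℤ) := by
    intro i
    have h1 : 0 ≤ k i / g := Int.ediv_nonneg (hk0 i) hgnn
    rw [hbdef]
    simp only
    rw [Int.toNat_of_nonneg h1, Int.mul_ediv_cancel' (hgdvd i)]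
  -- gcd of b is 1
  have hgcdb : Finset.univ.gcd (fun i => (b i : ℤ)) = 1 := by
    set G := Finset.univ.gcd (fun i => (b i : ℤ)) with hGdef
    have hGnn : 0 ≤ G := by
      have := Finset.normalize_gcd (s := (Finset.univ : Finset (Fin n)))
        (f := fun i => (b i : ℤ))
      rw [← Int.abs_eq_normalize] at this
      rw [hGdef, ← this]
      exact abs_nonneg _
    have hdvd : g * G ∣ g := by
      rw [hgdef]
      apply Finset.dvd_gcd
      intro i _
      rw [show k i = g * (b i : ℤ) from hkb i]
      exact mul_dvd_mul_left g (hGdef ▸ Finset.gcd_dvd (Finset.mem_univ i))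
    have hG1 : G ∣ 1 := (mul_dvd_mul_iff_left hgne).mp (by rw [mul_one]; exact hdvd)
    rcases Int.isUnit_iff.mp (isUnit_of_dvd_one hG1) with h | h
    · exact h
    · rw [h] at hGnn; norm_num at hGnn
  set L := c - dot k (natCast tm) with hLdef
  have hL : k imax * k imin ≤ L := by rw [hLdef]; linarith
  set D := -dot k (tDelta tm tp) with hDdef
  have hD : 0 < D := by rw [hDdef]; linarith
  have hgdot : ∀ v : Fin n → ℤ, g ∣ ∑ i, k i * v i := fun v =>
    Finset.dvd_sum fun i _ => Dvd.dvd.mul_right (hgdvd i) _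
  have hgD : g ∣ D := by rw [hDdef, dot]; exact (hgdot _).neg_right
  have hgleD : g ≤ D := Int.le_of_dvd hD hgD
  set N := L + (-L) % g with hNdef
  have hNL : L ≤ N := by
    have := Int.emod_nonneg (-L) hgne
    rw [hNdef]; linarith
  have hNltLD : N < L + D := by
    have := Int.emod_lt_of_pos (-L) hgpos
    rw [hNdef]; linarith
  have hgN : g ∣ N := by
    refine ⟨-((-L)/g), ?_⟩
    rw [hNdef, Int.emod_def]; ring
  obtain ⟨m, hm⟩ := hgN
  have hLpos : 0 < L := by
    have h1 : 0 < k imax := lt_of_le_of_ne (hk0 imax) (Ne.symm hmaxnz)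
    have h2 : 0 < k imin := lt_of_le_of_ne (hk0 imin) (Ne.symm hminnz)
    exact lt_of_lt_of_le (mul_pos h1 h2) hL
  have hNpos : 0 < N := lt_of_lt_of_le hLpos hNL
  have hmpos : 0 < m := by
    rcases mul_pos_iff.mp (hm ▸ hNpos) with ⟨_, h⟩ | ⟨h, _⟩
    · exact h
    · linarith
  set M := m.toNat with hMdef
  have hMm : (M : ℤ) = m := Int.toNat_of_nonneg hmpos.le
  have hMnat : b imin * b imax ≤ M := by
    have h1 : g * (g * (b imax:ℤ) * (b imin:ℤ)) ≤ g * m := by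
      calc g * (g * (b imax:ℤ) * (b imin:ℤ)) = (g * (b imax:ℤ)) * (g * (b imin:ℤ)) := by ring
        _ = k imax * k imin := by rw [← hkb imax, ← hkb imin]
        _ ≤ L := hL
        _ ≤ N := hNL
        _ = g * m := hm
    have h2 : g * (b imax:ℤ) * (b imin:ℤ) ≤ m := le_of_mul_le_mul_left h1 hgpos
    have h3 : (b imin:ℤ) * (b imax:ℤ) ≤ m := by nlinarith [Int.natCast_nonneg (b imax), Int.natCast_nonneg (b imin)]
    rw [← hMm] at h3
    exact_mod_cast h3
  have hbmax : ∀ l, b l ≤ b imax := by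
    intro l
    by_cases hl : k l = 0
    · have hbl : b l = 0 := by
        have h0 := hkb l
        rw [hl] at h0
        have h1 : (b l : ℤ) = 0 := by
          rcases mul_eq_zero.mp h0.symm with h | h
          · exact absurd h hgne
          · exact h
        exact_mod_cast h1
      rw [hbl]
      exact Nat.zero_le _
    · have h1 := hmax l hl
      rw [hkb l, hkb imax] at h1
      have h2 := le_of_mul_le_mul_left h1 hgpos
      exact_mod_cast h2
  have hbminnz : b imin ≠ 0 := by
    intro h
    apply hminnz
    rw [hkb imin, h]
    simp
  obtain ⟨x, hx⟩ := rep b hgcdb imax imin hbminnz hbmax M hMnat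
  apply hind
  have hdotx : dot k (natCast x) = N := by
    rw [dot]
    calc ∑ i, k i * (natCast x) i = ∑ i, g * ((b i : ℤ) * ((x i : ℕ) : ℤ)) :=
          Finset.sum_congr rfl fun i _ => by rw [hkb i]; show g * (b i:ℤ) * ((x i:ℕ):ℤ) = _; ring
      _ = g * ∑ i, (b i : ℤ) * ((x i : ℕ) : ℤ) := (Finset.mul_sum _ _ _).symm
      _ = g * ((∑ i, b i * x i : ℕ) : ℤ) := by push_cast; ring
      _ = g * (M : ℤ) := by rw [hx]
      _ = g * m := by rw [hMm]
      _ = N := hm.symm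
  refine ⟨x, ?_, ?_⟩
  · rw [hdotx]; rw [hLdef] at hNL; linarith
  · rw [hdotx]; rw [hLdef, hDdef] at hNltLD; linarith
end
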